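/- arXiv:1201.3239 — 3 statements merged into one kernel-verified Lean document; each statement's English description precedes it below -/
import Mathlib

section
/- The tail bound: for r > 0, d ≥ 1, real vectors x, y ∈ ℝ^{d+1}, and N ∈ ℕ sufficiently large so that r²·∑_{i=1}^{d+1}(|x_i| + y_i²) < N+1, the absolute value of the tail ∑_{|α+β| ≥ N} r^{d+2|α+β|} ((d−1)!!·∏(2α_i+2β_i−1)!!)/((d−1+2|α|+2|β|)!!·α!·(2β)!) x^α y^{2β} is at most (r^d/N!)·L^N·(N+1)/(N+1−L), where L = r²·∑_{i=1}^{d+1}(|x_i| + y_i²). -/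
/-!
The coefficient of `r^(d+2n) x^α y^(2β)`, `n = |α| + |β|`, is at most `1 / (α! β!)`: the odd double
factorials satisfy `∏ (2α_i + 2β_i - 1)‼ ≤ ∏ (2(α_i + β_i))‼ ≤ (2n)‼` and
`(d-1)‼ (2n)‼ ≤ (d-1+2n)‼`, while `β_i! ≤ (2β_i)!`. So the tail is dominated termwise by
`r^(d+2n) ∏ |x_i|^α_i / α_i! ∏ (y_i²)^β_i / β_i!`; grouping by `n`, the multinomial theorem turns
this majorant into the exponential tail `r^d ∑_{n ≥ N} L^n / n!`, which is at most `L^N / N!` times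
a geometric series of ratio `L / (N + 1)`.
-/

open scoped Nat
open Finset

theorem Nat.doubleFactorial_le_doubleFactorial_succ : ∀ n : ℕ, n‼ ≤ (n + 1)‼
  | 0 => le_rfl
  | 1 => by simp [Nat.doubleFactorial]
  | n + 2 => by
    rw [Nat.doubleFactorial_add_two, Nat.doubleFactorial_add_two]
    exact Nat.mul_le_mul (by omega) (doubleFactorial_le_doubleFactorial_succ n)

theorem Nat.doubleFactorial_two_mul_sub_one_le (m : ℕ) : (2 * m - 1)‼ ≤ (2 * m)‼ := by
  rcases m with _ | m
  · simp
  · simpa [show 2 * (m + 1) - 1 + 1 = 2 * (m + 1) by omega] using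
      doubleFactorial_le_doubleFactorial_succ (2 * (m + 1) - 1)

theorem Nat.doubleFactorial_mul_doubleFactorial_two_mul_le (m n : ℕ) :
    m‼ * (2 * n)‼ ≤ (m + 2 * n)‼ := by
  induction n with
  | zero => simp
  | succ n ih =>
    rw [show 2 * (n + 1) = 2 * n + 2 by ring, ← add_assoc, doubleFactorial_add_two,
      doubleFactorial_add_two, mul_left_comm]
    exact Nat.mul_le_mul (by omega) ih

theorem Finset.prod_doubleFactorial_two_mul_le {ι : Type*} (s : Finset ι) (f : ι → ℕ) :
    ∏ i ∈ s, (2 * f i)‼ ≤ (2 * ∑ i ∈ s, f i)‼ := by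
  simp only [Nat.doubleFactorial_two_mul, prod_mul_distrib, prod_pow_eq_pow_sum]
  exact Nat.mul_le_mul_left _ (Nat.le_of_dvd (Nat.factorial_pos _)
    (Nat.prod_factorial_dvd_factorial_sum s f))

theorem doubleFactorial_mul_prod_doubleFactorial_le {ι : Type*} [Fintype ι] (m : ℕ)
    (a b : ι → ℕ) :
    m‼ * (∏ i, (2 * a i + 2 * b i - 1)‼) * ∏ i, (b i)! ≤
      (m + 2 * ∑ i, a i + 2 * ∑ i, b i)‼ * ∏ i, (2 * b i)! := by
  have hodd : ∏ i, (2 * a i + 2 * b i - 1)‼ ≤ (2 * ∑ i, (a i + b i))‼ :=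
    calc ∏ i, (2 * a i + 2 * b i - 1)‼
      _ ≤ ∏ i, (2 * (a i + b i))‼ := prod_le_prod' fun i _ => by
          simpa only [mul_add] using Nat.doubleFactorial_two_mul_sub_one_le (a i + b i)
      _ ≤ _ := prod_doubleFactorial_two_mul_le _ _
  have hfac : ∏ i, (b i)! ≤ ∏ i, (2 * b i)! :=
    prod_le_prod' fun i _ => Nat.factorial_le (by omega)
  calc m‼ * (∏ i, (2 * a i + 2 * b i - 1)‼) * ∏ i, (b i)!
    _ ≤ m‼ * (2 * ∑ i, (a i + b i))‼ * ∏ i, (2 * b i)! :=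
        Nat.mul_le_mul (Nat.mul_le_mul_left _ hodd) hfac
    _ ≤ _ := by
        rw [add_assoc, ← mul_add, ← sum_add_distrib]
        exact Nat.mul_le_mul_right _ (Nat.doubleFactorial_mul_doubleFactorial_two_mul_le m _)

variable {ι : Type*} [Fintype ι]

/-- For `m = d - 1` this is the coefficient of `r^(d+2n) x^a y^(2b)` in the series. -/
noncomputable def fisherBinghamCoeff (m : ℕ) (a b : ι → ℕ) : ℝ :=
  ((m‼ : ℝ) * ∏ i, ((2 * a i + 2 * b i - 1)‼ : ℝ)) /
    (((m + 2 * ∑ i, a i + 2 * ∑ i, b i)‼ : ℝ) * (∏ i, ((a i)! : ℝ)) * ∏ i, ((2 * b i)! : ℝ))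

theorem fisherBinghamCoeff_nonneg (m : ℕ) (a b : ι → ℕ) : 0 ≤ fisherBinghamCoeff m a b := by
  unfold fisherBinghamCoeff; positivity

theorem fisherBinghamCoeff_le (m : ℕ) (a b : ι → ℕ) :
    fisherBinghamCoeff m a b ≤ ((∏ i, ((a i)! : ℝ)) * ∏ i, ((b i)! : ℝ))⁻¹ := by
  unfold fisherBinghamCoeff
  rw [← one_div, div_le_div_iff₀ (by positivity) (by positivity), one_mul]
  have key := Nat.mul_le_mul_right (∏ i, (a i)!) (doubleFactorial_mul_prod_doubleFactorial_le m a b)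
  calc _ = (((m‼ * (∏ i, (2 * a i + 2 * b i - 1)‼) * ∏ i, (b i)!) * ∏ i, (a i)! : ℕ) : ℝ) := by
        push_cast; ring
    _ ≤ (((m + 2 * ∑ i, a i + 2 * ∑ i, b i)‼ * ∏ i, (2 * b i)!) * ∏ i, (a i)! : ℕ) := by
        exact_mod_cast key
    _ = _ := by push_cast; ring

theorem abs_pow_mul_fisherBinghamCoeff_mul_le {r : ℝ} (hr : 0 ≤ r) (k m : ℕ) (a b : ι → ℕ)
    (x y : ι → ℝ) :
    |r ^ k * fisherBinghamCoeff m a b * (∏ i, x i ^ a i) * ∏ i, y i ^ (2 * b i)| ≤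
      r ^ k * ((∏ i, |x i| ^ a i / (a i)!) * ∏ i, (y i ^ 2) ^ b i / (b i)!) := by
  have hmajorant : (∏ i, |x i| ^ a i / (a i)!) * ∏ i, (y i ^ 2) ^ b i / (b i)! =
      ((∏ i, ((a i)! : ℝ)) * ∏ i, ((b i)! : ℝ))⁻¹ *
        ((∏ i, |x i| ^ a i) * ∏ i, y i ^ (2 * b i)) := by
    simp only [prod_div_distrib, ← pow_mul]
    field_simp
  rw [hmajorant, abs_mul, abs_mul, abs_mul, abs_prod, abs_of_nonneg (pow_nonneg hr k),
    abs_of_nonneg (fisherBinghamCoeff_nonneg m a b),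
    abs_of_nonneg (prod_nonneg fun i _ => (even_two_mul _).pow_nonneg _), mul_assoc, mul_assoc]
  simp only [abs_pow]
  have hY : 0 ≤ ∏ i, y i ^ (2 * b i) := prod_nonneg fun i _ => (even_two_mul _).pow_nonneg _
  gcongr
  exact fisherBinghamCoeff_le m a b

theorem Finset.sum_piAntidiag_prod_pow_div_factorial {K : Type*} [Field K] [CharZero K]
    [DecidableEq ι] (c : ι → K) (n : ℕ) :
    ∑ k ∈ piAntidiag univ n, ∏ i, c i ^ k i / (k i)! = (∑ i, c i) ^ n / n ! := by
  rw [sum_pow_eq_sum_piAntidiag, sum_div]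
  refine sum_congr rfl fun k hk => ?_
  have hspec := Nat.multinomial_spec univ k
  rw [(mem_piAntidiag.1 hk).1] at hspec
  have hfac : (n ! : K) = Nat.multinomial univ k * ∏ i, ((k i)! : K) := by
    rw [mul_comm]; exact_mod_cast hspec.symm
  rw [prod_div_distrib, hfac, mul_div_mul_left _ _
    (Nat.cast_ne_zero.2 (Nat.multinomial_pos univ k).ne')]

theorem ENNReal.tsum_ofReal_mul_prod_pow_div_factorial {w : ℕ → ℝ} (hw : ∀ n, 0 ≤ w n)
    {c : ι → ℝ} (hc : ∀ i, 0 ≤ c i) :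
    ∑' k : ι → ℕ, ENNReal.ofReal (w (∑ i, k i) * ∏ i, c i ^ k i / (k i)!) =
      ∑' n, ENNReal.ofReal (w n * (∑ i, c i) ^ n / n !) := by
  classical
  rw [← ENNReal.tsum_fiberwise _ fun k : ι → ℕ => ∑ i, k i]
  refine tsum_congr fun n => ?_
  have hfiber : (fun k : ι → ℕ => ∑ i, k i) ⁻¹' {n} =
      ((univ : Finset ι).piAntidiag n : Set (ι → ℕ)) := by
    ext k; simp [mem_piAntidiag]
  have hterm (k : ι → ℕ) : 0 ≤ w (∑ i, k i) * ∏ i, c i ^ k i / (k i)! :=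
    mul_nonneg (hw _) (prod_nonneg fun i _ => div_nonneg (pow_nonneg (hc i) _) (Nat.cast_nonneg _))
  rw [hfiber, Finset.tsum_subtype' (piAntidiag univ n)
      fun k => ENNReal.ofReal (w (∑ i, k i) * ∏ i, c i ^ k i / (k i)!),
    ← ENNReal.ofReal_sum_of_nonneg fun k _ => hterm k,
    sum_congr rfl fun k hk => by rw [(mem_piAntidiag.1 hk).1], ← mul_sum,
    sum_piAntidiag_prod_pow_div_factorial, mul_div_assoc]

theorem ENNReal.tsum_ofReal_mul_prod_pow_div_factorial_prod {κ : Type*} [Fintype κ]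
    {w : ℕ → ℝ} (hw : ∀ n, 0 ≤ w n) {u : ι → ℝ} {v : κ → ℝ} (hu : ∀ i, 0 ≤ u i)
    (hv : ∀ j, 0 ≤ v j) :
    ∑' p : (ι → ℕ) × (κ → ℕ), ENNReal.ofReal (w (∑ i, p.1 i + ∑ j, p.2 j) *
        ((∏ i, u i ^ p.1 i / (p.1 i)!) * ∏ j, v j ^ p.2 j / (p.2 j)!)) =
      ∑' n, ENNReal.ofReal (w n * (∑ i, u i + ∑ j, v j) ^ n / n !) := by
  rw [← (Equiv.sumArrowEquivProdArrow ι κ ℕ).tsum_eq]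
  convert tsum_ofReal_mul_prod_pow_div_factorial hw (c := Sum.elim u v)
    (Sum.rec hu hv) using 1
  · refine tsum_congr fun k => ?_
    simp [Fintype.sum_sum_type, Fintype.prod_sum_type, mul_div_mul_comm]
  · simp [Fintype.sum_sum_type]

theorem summable_ite_pow_div_factorial (L : ℝ) (N : ℕ) :
    Summable fun n : ℕ => if N ≤ n then L ^ n / n ! else 0 :=
  (Real.summable_pow_div_factorial |L|).of_norm_bounded fun n => by
    split_ifs
    · simp
    · simp only [norm_zero]; positivity

theorem tsum_ite_pow_div_factorial_le {L : ℝ} {N : ℕ} (hL₀ : 0 ≤ L) (hLN : L < N + 1) :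
    ∑' n, (if N ≤ n then L ^ n / n ! else 0) ≤ L ^ N / N ! * ((N + 1) / (N + 1 - L)) := by
  set q := L / (N + 1)
  have hq₀ : 0 ≤ q := by positivity
  have hq₁ : q < 1 := (div_lt_one (by positivity)).2 hLN
  have hsum := summable_ite_pow_div_factorial L N
  have hterm (n : ℕ) : L ^ (n + N) / (n + N)! ≤ L ^ N / N ! * q ^ n := by
    have hfac : (N ! : ℝ) * (N + 1) ^ n ≤ (n + N)! := by
      rw [add_comm n]; exact_mod_cast Nat.factorial_mul_pow_le_factorial
    calc L ^ (n + N) / (n + N)! ≤ L ^ (n + N) / (N ! * (N + 1) ^ n) := by gcongr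
      _ = L ^ N / N ! * q ^ n := by rw [pow_add, div_pow]; field_simp
  rw [← hsum.sum_add_tsum_nat_add N, sum_eq_zero fun n hn => if_neg (by simpa using hn),
    zero_add]
  calc ∑' n, (if N ≤ n + N then L ^ (n + N) / (n + N)! else 0)
    _ ≤ ∑' n, L ^ N / N ! * q ^ n :=
        (hsum.comp_injective (add_left_injective N)).tsum_le_tsum
          (fun n => by simpa using hterm n)
          ((summable_geometric_of_lt_one hq₀ hq₁).mul_left _)
    _ = L ^ N / N ! * ((N + 1) / (N + 1 - L)) := by
        rw [tsum_mul_left, tsum_geometric_of_lt_one hq₀ hq₁]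
        have : N + 1 - L ≠ 0 := by linarith
        simp only [q]
        field_simp

theorem fisher_bingham_series_tail_bound_general (d : ℕ) (r : ℝ) (hr : 0 < r)
    (x y : Fin (d + 1) → ℝ) (N : ℕ)
    (hL : r ^ 2 * ∑ i, (|x i| + y i ^ 2) < N + 1) :
    |∑' p : (Fin (d + 1) → ℕ) × (Fin (d + 1) → ℕ),
        if N ≤ (∑ i, p.1 i) + (∑ i, p.2 i) then
          r ^ (d + 2 * ((∑ i, p.1 i) + (∑ i, p.2 i))) *
            (((Nat.doubleFactorial (d - 1) : ℝ) *
                  ∏ i, (Nat.doubleFactorial (2 * p.1 i + 2 * p.2 i - 1) : ℝ)) /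
              ((Nat.doubleFactorial (d - 1 + 2 * (∑ i, p.1 i) + 2 * (∑ i, p.2 i)) : ℝ) *
                (∏ i, (Nat.factorial (p.1 i) : ℝ)) *
                ∏ i, (Nat.factorial (2 * p.2 i) : ℝ))) *
            (∏ i, x i ^ p.1 i) * ∏ i, y i ^ (2 * p.2 i)
        else 0| ≤
      r ^ d / (Nat.factorial N : ℝ) * (r ^ 2 * ∑ i, (|x i| + y i ^ 2)) ^ N *
        ((N + 1) / (N + 1 - r ^ 2 * ∑ i, (|x i| + y i ^ 2))) := by
  set L := r ^ 2 * ∑ i, (|x i| + y i ^ 2)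
  have hL₀ : 0 ≤ L := by positivity
  have hbound : 0 ≤ r ^ d / N ! * L ^ N * ((N + 1) / (N + 1 - L)) := by
    have : 0 < N + 1 - L := by linarith
    positivity
  set w : ℕ → ℝ := fun n => if N ≤ n then r ^ (d + 2 * n) else 0
  have hw (n : ℕ) : 0 ≤ w n := by simp only [w]; split_ifs <;> positivity
  rw [← Real.norm_eq_abs, ← ENNReal.ofReal_le_ofReal_iff hbound, ofReal_norm]
  calc _ ≤ ∑' p : (Fin (d + 1) → ℕ) × (Fin (d + 1) → ℕ),
        ENNReal.ofReal (w (∑ i, p.1 i + ∑ i, p.2 i) *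
          ((∏ i, |x i| ^ p.1 i / (p.1 i)!) * ∏ i, (y i ^ 2) ^ p.2 i / (p.2 i)!)) :=
        tsum_of_enorm_bounded ENNReal.summable.hasSum fun p => by
          change ‖if _ then r ^ _ * fisherBinghamCoeff (d - 1) p.1 p.2 * _ * _ else 0‖ₑ ≤ _
          simp only [w]
          split_ifs
          · rw [Real.enorm_eq_ofReal_abs]
            exact ENNReal.ofReal_le_ofReal
              (abs_pow_mul_fisherBinghamCoeff_mul_le hr.le _ _ _ _ _ _)
          · simp
    _ = ∑' n, ENNReal.ofReal (w n * (∑ i, |x i| + ∑ i, y i ^ 2) ^ n / n !) :=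
        ENNReal.tsum_ofReal_mul_prod_pow_div_factorial_prod hw (fun i => abs_nonneg _)
          fun i => sq_nonneg _
    _ = ENNReal.ofReal (r ^ d * ∑' n, if N ≤ n then L ^ n / n ! else 0) := by
        rw [← tsum_mul_left, ENNReal.ofReal_tsum_of_nonneg
          (fun n => mul_nonneg (by positivity) (by split_ifs <;> positivity))
          ((summable_ite_pow_div_factorial L N).mul_left _)]
        refine tsum_congr fun n => congrArg ENNReal.ofReal ?_
        simp only [w, L, ← sum_add_distrib]
        split_ifs <;> ring
    _ ≤ _ := ENNReal.ofReal_le_ofReal <| by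
        calc _ ≤ r ^ d * (L ^ N / N ! * ((N + 1) / (N + 1 - L))) :=
              mul_le_mul_of_nonneg_left (tsum_ite_pow_div_factorial_le hL₀ hL) (by positivity)
          _ = _ := by ring

theorem fisher_bingham_series_tail_bound (d : ℕ) (hd : 1 ≤ d) (r : ℝ) (hr : 0 < r)
    (x y : Fin (d + 1) → ℝ) (N : ℕ)
    (hL : r ^ 2 * ∑ i, (|x i| + y i ^ 2) < N + 1) :
    |∑' p : (Fin (d + 1) → ℕ) × (Fin (d + 1) → ℕ),
        if N ≤ (∑ i, p.1 i) + (∑ i, p.2 i) then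
          r ^ (d + 2 * ((∑ i, p.1 i) + (∑ i, p.2 i))) *
            (((Nat.doubleFactorial (d - 1) : ℝ) *
                  ∏ i, (Nat.doubleFactorial (2 * p.1 i + 2 * p.2 i - 1) : ℝ)) /
              ((Nat.doubleFactorial (d - 1 + 2 * (∑ i, p.1 i) + 2 * (∑ i, p.2 i)) : ℝ) *
                (∏ i, (Nat.factorial (p.1 i) : ℝ)) *
                ∏ i, (Nat.factorial (2 * p.2 i) : ℝ))) *
            (∏ i, x i ^ p.1 i) * ∏ i, y i ^ (2 * p.2 i)
        else 0| ≤
      r ^ d / (Nat.factorial N : ℝ) * (r ^ 2 * ∑ i, (|x i| + y i ^ 2)) ^ N *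
        ((N + 1) / (N + 1 - r ^ 2 * ∑ i, (|x i| + y i ^ 2))) :=
  fisher_bingham_series_tail_bound_general d r hr x y N hL
end

section
/- The annihilating operator C_{ij}: for 1 ≤ i < j ≤ d+1, the function Z̃(x,y,r) = ∫_{S^d(r)} exp(∑_k (x_k t_k² + y_k t_k)) |dt| satisfies 2(x_i − x_j) ∂²Z̃/∂y_i∂y_j + y_i ∂Z̃/∂y_j − y_j ∂Z̃/∂y_i = 0. -/
open MeasureTheory

/-- The restricted Fisher–Bingham normalizing constant. -/
noncomputable def Ztilde (d : ℕ) (x y : Fin (d + 1) → ℝ) (r : ℝ) : ℝ :=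
  ∫ t in Metric.sphere (0 : EuclideanSpace ℝ (Fin (d + 1))) r,
    Real.exp (∑ i, (x i * t i ^ 2 + y i * t i)) ∂(μH[(d : ℝ)])

/-- Partial derivative of a function on `Fin m → ℝ` with respect to the `i`-th
coordinate. -/
noncomputable def pd {m : ℕ} (i : Fin m) (f : (Fin m → ℝ) → ℝ) :
    (Fin m → ℝ) → ℝ :=
  fun y => deriv (fun s => f (Function.update y i s)) (y i)

open Metric Real

/-!
The rotation `R_θ` of the `(t_i, t_j)`-plane is an isometry preserving the sphere, hence it
preserves the restricted Hausdorff measure and `θ ↦ ∫ f (R_θ t)` is constant. Differentiating at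
`θ = 0` under the integral sign, for `f t = exp (∑ k, x k * t k ^ 2 + y k * t k)`, gives
`∫ ((2 x_j t_j + y_j) t_i - (2 x_i t_i + y_i) t_j) f = 0`. Differentiating in `y` under the
integral sign turns `∂/∂y_k` into multiplication of the integrand by `t_k`, and the identity
above is then exactly `C_ij Z̃ = 0`.

Differentiation under the integral sign only needs a finite measure carried by a compact set. The
`d`-dimensional Hausdorff measure of the sphere is finite because the sphere is covered by the
`2 (d + 1)` graphs `t_k = ±√(r² - ‖v‖²)` over closed `d`-balls of radius `< r`, on which these
graphs are `C¹`, hence Lipschitz.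
-/

section ParametricIntegral

variable {X : Type*} [TopologicalSpace X] [MeasurableSpace X] [OpensMeasurableSpace X]
  {μ : Measure X} [IsFiniteMeasure μ] {K : Set X}

lemma Continuous.integrable_of_ae_mem_isCompact (hK : IsCompact K) (hμK : ∀ᵐ t ∂μ, t ∈ K)
    {f : X → ℝ} (hf : Continuous f) : Integrable f μ := by
  obtain ⟨C, hC⟩ := hK.exists_bound_of_continuousOn hf.continuousOn
  exact Integrable.of_bound hf.aestronglyMeasurable C (hμK.mono hC)

theorem hasDerivAt_integral_of_ae_mem_isCompact (hK : IsCompact K) (hμK : ∀ᵐ t ∂μ, t ∈ K)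
    {F F' : ℝ → X → ℝ} (hF : Continuous (Function.uncurry F))
    (hF' : Continuous (Function.uncurry F')) (hFF' : ∀ s t, HasDerivAt (F · t) (F' s t) s)
    (s₀ : ℝ) : HasDerivAt (fun s => ∫ t, F s t ∂μ) (∫ t, F' s₀ t ∂μ) s₀ := by
  obtain ⟨C, hC⟩ := ((isCompact_closedBall s₀ 1).prod hK).exists_bound_of_continuousOn
    hF'.continuousOn
  have hFs (s : ℝ) : Continuous (F s) := hF.comp (Continuous.prodMk_right s)
  refine (hasDerivAt_integral_of_dominated_loc_of_deriv_le (bound := fun _ => C)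
    (ball_mem_nhds s₀ one_pos) (.of_forall fun s => (hFs s).aestronglyMeasurable)
    ((hFs s₀).integrable_of_ae_mem_isCompact hK hμK)
    (hF'.comp (Continuous.prodMk_right s₀)).aestronglyMeasurable ?_ (integrable_const C)
    (.of_forall fun t s _ => hFF' s t)).2
  filter_upwards [hμK] with t ht s hs
  exact hC (s, t) ⟨ball_subset_closedBall hs, ht⟩

end ParametricIntegral

section GivensRotation

variable {ι : Type*} [DecidableEq ι] {i j : ι}

noncomputable def givensRotation (i j : ι) (θ : ℝ) (t : EuclideanSpace ℝ ι) :
    EuclideanSpace ℝ ι :=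
  WithLp.toLp 2 fun m =>
    if m = i then cos θ * t i - sin θ * t j
    else if m = j then sin θ * t i + cos θ * t j
    else t m

lemma givensRotation_apply (θ : ℝ) (t : EuclideanSpace ℝ ι) (m : ι) :
    givensRotation i j θ t m =
      if m = i then cos θ * t i - sin θ * t j
      else if m = j then sin θ * t i + cos θ * t j
      else t m := rfl

lemma givensRotation_zero (t : EuclideanSpace ℝ ι) : givensRotation i j 0 t = t := by
  ext m
  simp only [givensRotation_apply, cos_zero, sin_zero]
  split_ifs <;> subst_vars <;> ring

lemma givensRotation_givensRotation (hij : i ≠ j) (θ φ : ℝ) (t : EuclideanSpace ℝ ι) :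
    givensRotation i j θ (givensRotation i j φ t) = givensRotation i j (θ + φ) t := by
  ext m
  simp only [givensRotation_apply, if_pos, if_neg hij.symm, cos_add, sin_add]
  split_ifs <;> ring

lemma continuous_givensRotation :
    Continuous fun p : ℝ × EuclideanSpace ℝ ι => givensRotation i j p.1 p.2 := by
  refine (PiLp.continuous_toLp 2 _).comp (continuous_pi fun m => ?_)
  dsimp only
  split_ifs <;> fun_prop

lemma hasDerivAt_givensRotation_apply (t : EuclideanSpace ℝ ι) (m : ι) :
    HasDerivAt (fun θ => givensRotation i j θ t m)
      (if m = i then -t j else if m = j then t i else 0) 0 := by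
  simp only [givensRotation_apply]
  split_ifs
  · simpa using
      ((hasDerivAt_cos 0).mul_const (t i)).fun_sub ((hasDerivAt_sin 0).mul_const (t j))
  · simpa using
      ((hasDerivAt_sin 0).mul_const (t i)).fun_add ((hasDerivAt_cos 0).mul_const (t j))
  · exact hasDerivAt_const _ _

variable [Fintype ι]

lemma norm_givensRotation (hij : i ≠ j) (θ : ℝ) (t : EuclideanSpace ℝ ι) :
    ‖givensRotation i j θ t‖ = ‖t‖ := by
  refine (sq_eq_sq₀ (norm_nonneg _) (norm_nonneg _)).mp ?_
  rw [EuclideanSpace.real_norm_sq_eq, EuclideanSpace.real_norm_sq_eq, ← sub_eq_zero,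
    ← Finset.sum_sub_distrib, Fintype.sum_eq_add i j hij fun m hm => by
      simp [givensRotation_apply, hm.1, hm.2]]
  simp only [givensRotation_apply, if_pos, if_neg hij.symm]
  linear_combination (t i ^ 2 + t j ^ 2) * sin_sq_add_cos_sq θ

noncomputable def givensRotationEquiv (hij : i ≠ j) (θ : ℝ) :
    EuclideanSpace ℝ ι ≃ₗᵢ[ℝ] EuclideanSpace ℝ ι where
  toFun := givensRotation i j θ
  invFun := givensRotation i j (-θ)
  map_add' u v := by
    ext m
    simp only [givensRotation_apply, PiLp.add_apply]
    split_ifs <;> ring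
  map_smul' c v := by
    ext m
    simp only [givensRotation_apply, PiLp.smul_apply, smul_eq_mul, RingHom.id_apply]
    split_ifs <;> ring
  left_inv t := by rw [givensRotation_givensRotation hij, neg_add_cancel, givensRotation_zero]
  right_inv t := by rw [givensRotation_givensRotation hij, add_neg_cancel, givensRotation_zero]
  norm_map' := norm_givensRotation hij θ

theorem integral_eq_zero_of_hasDerivAt_givensRotation {μ : Measure (EuclideanSpace ℝ ι)}
    [IsFiniteMeasure μ] {K : Set (EuclideanSpace ℝ ι)} (hK : IsCompact K)
    (hμK : ∀ᵐ t ∂μ, t ∈ K) (hij : i ≠ j)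
    (hrot : ∀ θ, MeasurePreserving (givensRotationEquiv hij θ) μ μ)
    {f g : EuclideanSpace ℝ ι → ℝ} (hf : Continuous f) (hg : Continuous g)
    (hfg : ∀ t, HasDerivAt (fun θ => f (givensRotation i j θ t)) (g t) 0) :
    ∫ t, g t ∂μ = 0 := by
  have hderiv (θ : ℝ) (t : EuclideanSpace ℝ ι) :
      HasDerivAt (fun φ => f (givensRotation i j φ t)) (g (givensRotation i j θ t)) θ := by
    -- `R_φ t = R_(φ - θ) (R_θ t)`, so the derivative at `θ` is the one at `0` at the point `R_θ t`.
    have := (sub_self θ ▸ hfg (givensRotation i j θ t)).comp_sub_const θ θ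
    simpa only [givensRotation_givensRotation hij, sub_add_cancel] using this
  have hG := hasDerivAt_integral_of_ae_mem_isCompact hK hμK
    (F := fun θ t => f (givensRotation i j θ t)) (F' := fun θ t => g (givensRotation i j θ t))
    (hf.comp continuous_givensRotation) (hg.comp continuous_givensRotation) hderiv 0
  have hconst : (fun θ => ∫ t, f (givensRotation i j θ t) ∂μ) = fun _ => ∫ t, f t ∂μ :=
    funext fun θ =>
      (hrot θ).integral_comp (givensRotationEquiv hij θ).toHomeomorph.measurableEmbedding f
  simp only [givensRotation_zero, hconst] at hG
  exact hG.unique (hasDerivAt_const _ _)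

end GivensRotation

section FisherBingham

variable {ι : Type*} [Fintype ι]

noncomputable def fisherBingham (x y : ι → ℝ) (t : EuclideanSpace ℝ ι) : ℝ :=
  exp (∑ k, (x k * t k ^ 2 + y k * t k))

lemma continuous_fisherBingham (x y : ι → ℝ) : Continuous (fisherBingham x y) := by
  unfold fisherBingham
  fun_prop

variable [DecidableEq ι]

lemma fisherBingham_update (x y : ι → ℝ) (j : ι) (s : ℝ) (t : EuclideanSpace ℝ ι) :
    fisherBingham x (Function.update y j s) t = fisherBingham x y t * exp ((s - y j) * t j) := by
  rw [fisherBingham, fisherBingham, ← exp_add]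
  congr 1
  rw [← sub_eq_iff_eq_add', ← Finset.sum_sub_distrib,
    Fintype.sum_eq_single j fun k hk => by simp [Function.update_of_ne hk]]
  simp only [Function.update_self]
  ring

lemma hasDerivAt_fisherBingham_givensRotation {i j : ι} (hij : i ≠ j) (x y : ι → ℝ)
    (t : EuclideanSpace ℝ ι) :
    HasDerivAt (fun θ => fisherBingham x y (givensRotation i j θ t))
      (((2 * x j * t j + y j) * t i - (2 * x i * t i + y i) * t j) * fisherBingham x y t) 0 := by
  have hterm (k : ι) : HasDerivAt
      (fun θ => x k * givensRotation i j θ t k ^ 2 + y k * givensRotation i j θ t k)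
      ((2 * x k * t k + y k) * (if k = i then -t j else if k = j then t i else 0)) 0 := by
    have h := hasDerivAt_givensRotation_apply (i := i) (j := j) t k
    refine (((h.pow 2).const_mul (x k)).fun_add (h.const_mul (y k))).congr_deriv ?_
    rw [givensRotation_zero]
    push_cast
    ring
  have hsum :
      ∑ k, (2 * x k * t k + y k) * (if k = i then -t j else if k = j then t i else 0) =
        (2 * x j * t j + y j) * t i - (2 * x i * t i + y i) * t j := by
    rw [Fintype.sum_eq_add i j hij fun k hk => by simp [hk.1, hk.2]]
    simp only [if_pos, if_neg hij.symm]
    ring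
  refine (HasDerivAt.fun_sum (u := Finset.univ) fun k _ => hterm k).exp.congr_deriv ?_
  rw [hsum, givensRotation_zero, mul_comm]
  rfl

variable {μ : Measure (EuclideanSpace ℝ ι)} [IsFiniteMeasure μ]
  {K : Set (EuclideanSpace ℝ ι)}

lemma hasDerivAt_integral_mul_fisherBingham_update (hK : IsCompact K) (hμK : ∀ᵐ t ∂μ, t ∈ K)
    {w : EuclideanSpace ℝ ι → ℝ} (hw : Continuous w) (x y : ι → ℝ) (j : ι) :
    HasDerivAt (fun s => ∫ t, w t * fisherBingham x (Function.update y j s) t ∂μ)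
      (∫ t, t j * w t * fisherBingham x y t ∂μ) (y j) := by
  have hfb := continuous_fisherBingham x y
  simp_rw [fisherBingham_update]
  convert hasDerivAt_integral_of_ae_mem_isCompact hK hμK
    (F := fun s t => w t * (fisherBingham x y t * exp ((s - y j) * t j)))
    (F' := fun s t => t j * w t * (fisherBingham x y t * exp ((s - y j) * t j)))
    (by fun_prop) (by fun_prop) (fun s t => ?_) (y j) using 1
  · simp
  · refine ((((hasDerivAt_id s).sub_const (y j)).mul_const (t j)).exp.const_mul _).const_mul _
      |>.congr_deriv ?_
    simp only [id]
    ring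

end FisherBingham

section PartialDerivatives

variable {n : ℕ} {μ : Measure (EuclideanSpace ℝ (Fin n))} [IsFiniteMeasure μ]
  {K : Set (EuclideanSpace ℝ (Fin n))}

lemma pd_integral_mul_fisherBingham (hK : IsCompact K) (hμK : ∀ᵐ t ∂μ, t ∈ K)
    {w : EuclideanSpace ℝ (Fin n) → ℝ} (hw : Continuous w) (x y : Fin n → ℝ) (j : Fin n) :
    pd j (fun y' => ∫ t, w t * fisherBingham x y' t ∂μ) y =
      ∫ t, t j * w t * fisherBingham x y t ∂μ :=
  (hasDerivAt_integral_mul_fisherBingham_update hK hμK hw x y j).deriv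

theorem pd_integral_fisherBingham_Cij (hK : IsCompact K) (hμK : ∀ᵐ t ∂μ, t ∈ K) {i j : Fin n}
    (hij : i ≠ j) (hrot : ∀ θ, MeasurePreserving (givensRotationEquiv hij θ) μ μ)
    (x y : Fin n → ℝ) :
    2 * (x i - x j) * pd i (pd j (fun y' => ∫ t, fisherBingham x y' t ∂μ)) y +
        y i * pd j (fun y' => ∫ t, fisherBingham x y' t ∂μ) y -
        y j * pd i (fun y' => ∫ t, fisherBingham x y' t ∂μ) y = 0 := by
  have hpd (k : Fin n) (y' : Fin n → ℝ) :
      pd k (fun y' => ∫ t, fisherBingham x y' t ∂μ) y' =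
        ∫ t, t k * fisherBingham x y' t ∂μ := by
    simpa using pd_integral_mul_fisherBingham hK hμK continuous_const x y' k (w := fun _ => 1)
  have hpd2 : pd i (pd j (fun y' => ∫ t, fisherBingham x y' t ∂μ)) y =
      ∫ t, t i * t j * fisherBingham x y t ∂μ := by
    rw [funext (hpd j)]
    exact pd_integral_mul_fisherBingham hK hμK (w := fun t => t j) (by fun_prop) x y i
  have hint {f : EuclideanSpace ℝ (Fin n) → ℝ} (hf : Continuous f) : Integrable f μ :=
    hf.integrable_of_ae_mem_isCompact hK hμK
  have hfb := continuous_fisherBingham x y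
  have hflow := integral_eq_zero_of_hasDerivAt_givensRotation hK hμK hij hrot hfb
    (by fun_prop) (hasDerivAt_fisherBingham_givensRotation hij x y)
  have hexpand : (fun t : EuclideanSpace ℝ (Fin n) =>
      ((2 * x j * t j + y j) * t i - (2 * x i * t i + y i) * t j) * fisherBingham x y t) =
      fun t => -(2 * (x i - x j) * (t i * t j * fisherBingham x y t) +
        y i * (t j * fisherBingham x y t) - y j * (t i * fisherBingham x y t)) := by
    funext t
    ring
  rw [hexpand, integral_neg, integral_sub (hint (by fun_prop)) (hint (by fun_prop)),
    integral_add (hint (by fun_prop)) (hint (by fun_prop)), integral_const_mul,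
    integral_const_mul, integral_const_mul, neg_eq_zero] at hflow
  rw [hpd2, hpd j, hpd i, hflow]

end PartialDerivatives

section SphereMeasure

variable {d : ℕ}

noncomputable def sphereChart (r s : ℝ) (k : Fin (d + 1)) (v : EuclideanSpace ℝ (Fin d)) :
    EuclideanSpace ℝ (Fin (d + 1)) :=
  WithLp.toLp 2 (Fin.insertNth k (s * √(r ^ 2 - ‖v‖ ^ 2)) v.ofLp)

lemma contDiffOn_sphereChart {r ρ : ℝ} (hρ : ρ < r) (s : ℝ) (k : Fin (d + 1)) :
    ContDiffOn ℝ 1 (sphereChart r s k) (closedBall 0 ρ) := by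
  refine contDiffOn_piLp' _ fun m => ?_
  rcases k.eq_self_or_eq_succAbove m with rfl | ⟨a, rfl⟩
  · simp only [sphereChart, Fin.insertNth_apply_same]
    refine contDiffOn_const.mul
      ((contDiff_const.sub (contDiff_norm_sq ℝ)).contDiffOn.sqrt fun v hv => ?_)
    have : ‖v‖ ^ 2 < r ^ 2 := pow_lt_pow_left₀
      ((mem_closedBall_zero_iff.mp hv).trans_lt hρ) (norm_nonneg _) two_ne_zero
    linarith
  · simp only [sphereChart, Fin.insertNth_apply_succAbove]
    fun_prop

lemma hausdorffMeasure_image_sphereChart_lt_top {r ρ : ℝ} (hρ : ρ < r) (s : ℝ)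
    (k : Fin (d + 1)) : μH[(d : ℝ)] (sphereChart r s k '' closedBall 0 ρ) < ⊤ := by
  obtain ⟨C, hC⟩ := (contDiffOn_sphereChart hρ s k).exists_lipschitzOnWith one_ne_zero
    (convex_closedBall 0 ρ) (isCompact_closedBall 0 ρ)
  calc _ ≤ C ^ (d : ℝ) * μH[(d : ℝ)] (closedBall (0 : EuclideanSpace ℝ (Fin d)) ρ) :=
        hC.hausdorffMeasure_image_le (Nat.cast_nonneg d)
    _ < ⊤ := ENNReal.mul_lt_top (by simp) (isCompact_closedBall 0 ρ).measure_lt_top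

lemma sphere_subset_iUnion_sphereChart (r : ℝ) :
    sphere (0 : EuclideanSpace ℝ (Fin (d + 1))) r ⊆ ⋃ k,
      (sphereChart r 1 k '' closedBall 0 √(r ^ 2 - r ^ 2 / (d + 1)) ∪
        sphereChart r (-1) k '' closedBall 0 √(r ^ 2 - r ^ 2 / (d + 1))) := by
  intro t ht
  have hnorm : ∑ m, t m ^ 2 = r ^ 2 := by
    rw [← EuclideanSpace.real_norm_sq_eq, mem_sphere_zero_iff_norm.mp ht]
  -- a coordinate of maximal size has `t k ^ 2 ≥ r ^ 2 / (d + 1)`, so the others lie well inside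
  -- the ball of radius `r`, where the chart is smooth
  obtain ⟨k, -, hk⟩ :=
    Finset.exists_max_image Finset.univ (fun m => t m ^ 2) Finset.univ_nonempty
  set v : EuclideanSpace ℝ (Fin d) := WithLp.toLp 2 (Fin.removeNth k t.ofLp)
  have hv : ‖v‖ ^ 2 = r ^ 2 - t k ^ 2 := by
    rw [EuclideanSpace.real_norm_sq_eq, ← hnorm, ← Fin.add_sum_removeNth k]
    simp [v, Fin.removeNth]
  have hbig : r ^ 2 ≤ (d + 1) * t k ^ 2 := by
    calc r ^ 2 = ∑ m, t m ^ 2 := hnorm.symm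
      _ ≤ ∑ _m : Fin (d + 1), t k ^ 2 := Finset.sum_le_sum fun m _ => hk m (Finset.mem_univ m)
      _ = (d + 1) * t k ^ 2 := by simp
  have hmem : v ∈ closedBall 0 √(r ^ 2 - r ^ 2 / (d + 1)) := by
    refine mem_closedBall_zero_iff.mpr (le_sqrt_of_sq_le ?_)
    rw [hv]
    have : r ^ 2 / (d + 1) ≤ t k ^ 2 := by rw [div_le_iff₀ (by positivity)]; linarith
    linarith
  have hchart (s : ℝ) (hs : s * |t k| = t k) : sphereChart r s k v = t := by
    rw [sphereChart, hv, sub_sub_cancel, sqrt_sq_eq_abs, hs, Fin.insertNth_self_removeNth]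
  refine Set.mem_iUnion.mpr ⟨k, ?_⟩
  rcases le_or_gt 0 (t k) with h | h
  · exact .inl ⟨v, hmem, hchart 1 (by rw [abs_of_nonneg h, one_mul])⟩
  · exact .inr ⟨v, hmem, hchart (-1) (by rw [abs_of_neg h]; ring)⟩

theorem hausdorffMeasure_sphere_lt_top {r : ℝ} (hr : 0 < r) :
    μH[(d : ℝ)] (sphere (0 : EuclideanSpace ℝ (Fin (d + 1))) r) < ⊤ := by
  have hρ : √(r ^ 2 - r ^ 2 / (d + 1)) < r := by
    have : 0 < r ^ 2 / (d + 1) := by positivity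
    exact (sqrt_lt' hr).mpr (by linarith)
  refine (measure_mono (sphere_subset_iUnion_sphereChart r)).trans_lt
    ((measure_iUnion_fintype_le _ _).trans_lt (ENNReal.sum_lt_top.mpr fun k _ => ?_))
  exact (measure_union_le _ _).trans_lt (ENNReal.add_lt_top.mpr
    ⟨hausdorffMeasure_image_sphereChart_lt_top hρ 1 k,
      hausdorffMeasure_image_sphereChart_lt_top hρ (-1) k⟩)

end SphereMeasure

lemma measurePreserving_restrict_sphere {E : Type*} [NormedAddCommGroup E] [NormedSpace ℝ E]
    [MeasurableSpace E] [BorelSpace E] (e : E ≃ₗᵢ[ℝ] E) (d r : ℝ) :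
    MeasurePreserving e (μH[d].restrict (sphere 0 r)) (μH[d].restrict (sphere 0 r)) := by
  have := (e.toIsometryEquiv.measurePreserving_hausdorffMeasure d).restrict_preimage
    (isClosed_sphere (x := (0 : E)) (ε := r)).measurableSet
  rwa [LinearIsometryEquiv.coe_toIsometryEquiv, e.preimage_sphere, map_zero] at this

theorem Ztilde_Cij_general (d : ℕ) (x y : Fin (d + 1) → ℝ)
    (r : ℝ) (hr : 0 < r) (i j : Fin (d + 1)) (hij : i < j) :
    2 * (x i - x j) * pd i (pd j (fun y' => Ztilde d x y' r)) y +
        y i * pd j (fun y' => Ztilde d x y' r) y -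
        y j * pd i (fun y' => Ztilde d x y' r) y = 0 := by
  have : IsFiniteMeasure
      (μH[(d : ℝ)].restrict (sphere (0 : EuclideanSpace ℝ (Fin (d + 1))) r)) :=
    ⟨by simpa using hausdorffMeasure_sphere_lt_top hr⟩
  exact pd_integral_fisherBingham_Cij (isCompact_sphere 0 r)
    (ae_restrict_mem isClosed_sphere.measurableSet) hij.ne
    (fun θ => measurePreserving_restrict_sphere _ _ _) x y

theorem Ztilde_Cij (d : ℕ) (hd : 1 ≤ d) (x y : Fin (d + 1) → ℝ)
    (r : ℝ) (hr : 0 < r) (i j : Fin (d + 1)) (hij : i < j) :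
    2 * (x i - x j) * pd i (pd j (fun y' => Ztilde d x y' r)) y +
        y i * pd j (fun y' => Ztilde d x y' r) y -
        y j * pd i (fun y' => Ztilde d x y' r) y = 0 :=
  Ztilde_Cij_general d x y r hr i j hij
end

section
/- The Euler-type radial equation: the function Z̃(x,y,r) = ∫_{S^d(r)} exp(∑_i (x_i t_i² + y_i t_i)) |dt| satisfies r ∂Z̃/∂r = 2 ∑_{i=1}^{d+1} x_i ∂²Z̃/∂y_i² + ∑_{i=1}^{d+1} y_i ∂Z̃/∂y_i + d·Z̃. -/
/-!
Rescaling to the unit sphere gives `Z̃(r) = r ^ d * ∫_{S^d(1)} f (r • s) ds`, where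
`f t = exp (∑ i, (x i * t i ^ 2 + y i * t i))`, hence `r Z̃'(r) = d Z̃(r) + ∫_{S^d(r)} Df(t) t dt`.
The exponent is a quadratic plus a linear form, so Euler's identity gives
`Df(t) t = (2 ∑ x_i t_i² + ∑ y_i t_i) f(t)`; and `∂Z̃/∂y_i`, `∂²Z̃/∂y_i²` are the moments
`∫ t_i f`, `∫ t_i² f`, because `y_i` enters the exponent linearly.
Differentiation under the integral sign is legitimate since the integrands are continuous on a
compact sphere of finite `d`-dimensional Hausdorff measure. That measure is finite because the unit
sphere is covered by the radial projections of the `2(d+1)` faces of the cube `[-1, 1]^(d+1)`,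
which are Lipschitz images of a cube in `ℝ^d`.
-/

open MeasureTheory

open Metric Set Function
open scoped Pointwise NNReal

theorem hasDerivAt_comp_smul_const {E F : Type*} [NormedAddCommGroup E] [NormedSpace ℝ E]
    [NormedAddCommGroup F] [NormedSpace ℝ F] {f : E → F} {ρ : ℝ} {s : E}
    (hf : DifferentiableAt ℝ f (ρ • s)) :
    HasDerivAt (fun ρ : ℝ => f (ρ • s)) (fderiv ℝ f (ρ • s) s) ρ := by
  have h := hf.hasFDerivAt.comp_hasDerivAt ρ ((hasDerivAt_id ρ).smul_const s)
  rwa [one_smul] at h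

theorem hasDerivAt_setIntegral_of_continuous {X : Type*} [TopologicalSpace X] [T2Space X]
    [MeasurableSpace X] [OpensMeasurableSpace X] {μ : Measure X} {K : Set X} (hK : IsCompact K)
    (hμK : μ K ≠ ⊤) {F F' : ℝ → X → ℝ} (hF : Continuous (uncurry F))
    (hF' : Continuous (uncurry F')) (hderiv : ∀ a t, HasDerivAt (F · t) (F' a t) a) (a₀ : ℝ) :
    HasDerivAt (fun a => ∫ t in K, F a t ∂μ) (∫ t in K, F' a₀ t ∂μ) a₀ := by
  have hFa : ∀ a, Continuous (F a) := fun a => hF.comp (Continuous.prodMk_right a)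
  obtain ⟨C, hC⟩ := ((isCompact_closedBall a₀ 1).prod hK).exists_bound_of_continuousOn
    hF'.continuousOn
  refine (hasDerivAt_integral_of_dominated_loc_of_deriv_le (bound := fun _ => C)
    (ball_mem_nhds a₀ one_pos) (.of_forall fun a => (hFa a).aestronglyMeasurable)
    ((hFa a₀).continuousOn.integrableOn_of_subset_isCompact hK hK.measurableSet subset_rfl hμK)
    (hF'.comp (Continuous.prodMk_right a₀)).aestronglyMeasurable ?_ (integrableOn_const hμK)
    (.of_forall fun t a _ => hderiv a t)).2
  filter_upwards [ae_restrict_mem hK.measurableSet] with t ht a ha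
  exact hC (a, t) ⟨ball_subset_closedBall ha, ht⟩

section SphereScaling

variable {E : Type*} [NormedAddCommGroup E] [NormedSpace ℝ E] {d r : ℝ}

theorem sphere_zero_eq_smul_unitSphere (hr : 0 < r) : sphere (0 : E) r = r • sphere 0 1 := by
  rw [smul_sphere' hr.ne', smul_zero, Real.norm_of_nonneg hr.le, mul_one]

variable [MeasurableSpace E] [BorelSpace E]

theorem hausdorffMeasure_sphere_ne_top (hd : 0 ≤ d) (h1 : μH[d] (sphere (0 : E) 1) ≠ ⊤)
    (hr : 0 < r) : μH[d] (sphere (0 : E) r) ≠ ⊤ := by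
  rw [sphere_zero_eq_smul_unitSphere hr, Measure.hausdorffMeasure_smul₀ hd hr.ne']
  exact ENNReal.mul_ne_top ENNReal.coe_ne_top h1

theorem setIntegral_sphere_eq_rpow_mul (hd : 0 ≤ d) (hr : 0 < r) (f : E → ℝ) :
    ∫ t in sphere 0 r, f t ∂μH[d] = r ^ d * ∫ s in sphere 0 1, f (r • s) ∂μH[d] := by
  have hmap : Measure.map (r • ·) (μH[d] : Measure E) = (‖r‖₊ ^ d)⁻¹ • μH[d] := by
    simpa [AffineMap.coe_homothety, NNReal.inv_rpow] using
      map_homothety_hausdorffMeasure (P := E) hd (0 : E) hr.ne'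
  have hpre : (r • ·) ⁻¹' sphere (0 : E) r = sphere 0 1 := by
    rw [preimage_smul₀ hr.ne', sphere_zero_eq_smul_unitSphere hr, inv_smul_smul₀ hr.ne']
  have hemb : MeasurableEmbedding (r • · : E → E) :=
    (Homeomorph.smulOfNeZero r hr.ne').measurableEmbedding
  rw [← hpre, ← hemb.setIntegral_map, hmap, Measure.restrict_smul, integral_smul_nnreal_measure,
    NNReal.smul_def, smul_eq_mul, ← mul_assoc, NNReal.coe_inv, NNReal.coe_rpow, coe_nnnorm,
    Real.norm_of_nonneg hr.le, mul_inv_cancel₀ (Real.rpow_pos_of_pos hr d).ne', one_mul]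

theorem hasDerivAt_setIntegral_sphere [ProperSpace E] (hd : 0 ≤ d)
    (h1 : μH[d] (sphere (0 : E) 1) ≠ ⊤) {f : E → ℝ} (hf : ContDiff ℝ 1 f) (hr : 0 < r) :
    HasDerivAt (fun ρ => ∫ t in sphere 0 ρ, f t ∂μH[d])
      (r⁻¹ * (d * ∫ t in sphere 0 r, f t ∂μH[d] +
        ∫ t in sphere 0 r, fderiv ℝ f t t ∂μH[d])) r := by
  have hΨ := hasDerivAt_setIntegral_of_continuous (isCompact_sphere (0 : E) 1) h1
    (F := fun ρ s => f (ρ • s)) (by fun_prop)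
    (((hf.continuous_fderiv one_ne_zero).comp (by fun_prop)).clm_apply continuous_snd)
    (fun ρ s => hasDerivAt_comp_smul_const ((hf.differentiable one_ne_zero) _)) r
  have hscale : (fun ρ => ∫ t in sphere 0 ρ, f t ∂μH[d]) =ᶠ[nhds r]
      fun ρ => ρ ^ d * ∫ s in sphere 0 1, f (ρ • s) ∂μH[d] :=
    (eventually_gt_nhds hr).mono fun ρ hρ => setIntegral_sphere_eq_rpow_mul hd hρ f
  refine (((Real.hasDerivAt_rpow_const (Or.inl hr.ne')).mul hΨ).congr_of_eventuallyEq
    hscale).congr_deriv ?_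
  rw [setIntegral_sphere_eq_rpow_mul hd hr, setIntegral_sphere_eq_rpow_mul hd hr]
  simp only [map_smul, smul_eq_mul]
  rw [integral_const_mul, Real.rpow_sub_one hr.ne']
  field_simp

end SphereScaling

theorem Fin.isometry_insertNth {n : ℕ} {α : Fin (n + 1) → Type*} [∀ j, PseudoMetricSpace (α j)]
    (i : Fin (n + 1)) (x : α i) : Isometry (i.insertNth x) :=
  Isometry.of_dist_eq fun f g => by simp [Fin.dist_insertNth_insertNth]

theorem lipschitzOnWith_inv_norm_smul {F : Type*} [NormedAddCommGroup F] [NormedSpace ℝ F] :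
    LipschitzOnWith 2 (fun x : F => ‖x‖⁻¹ • x) {x | 1 ≤ ‖x‖} := by
  refine LipschitzOnWith.of_dist_le_mul fun p (hp : 1 ≤ ‖p‖) q (hq : 1 ≤ ‖q‖) => ?_
  have hp0 : 0 < ‖p‖ := one_pos.trans_le hp
  have hq0 : 0 < ‖q‖ := one_pos.trans_le hq
  have hsplit :
      ‖p‖⁻¹ • p - ‖q‖⁻¹ • q = ‖p‖⁻¹ • ((p - q) + (‖q‖ - ‖p‖) • (‖q‖⁻¹ • q)) := by
    have hscalar : ‖p‖⁻¹ * (‖q‖ - ‖p‖) * ‖q‖⁻¹ = ‖p‖⁻¹ - ‖q‖⁻¹ := by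
      field_simp
    rw [smul_add, smul_smul, smul_smul, hscalar]
    module
  have hunit : ‖‖q‖⁻¹ • q‖ = 1 := by
    rw [norm_smul, norm_inv, norm_norm, inv_mul_cancel₀ hq0.ne']
  rw [dist_eq_norm, dist_eq_norm, hsplit, norm_smul, norm_inv, norm_norm, NNReal.coe_ofNat]
  calc ‖p‖⁻¹ * ‖p - q + (‖q‖ - ‖p‖) • (‖q‖⁻¹ • q)‖
      ≤ ‖p‖⁻¹ * (‖p - q‖ + |‖q‖ - ‖p‖|) := by
        gcongr
        refine (norm_add_le _ _).trans_eq ?_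
        rw [norm_smul, hunit, mul_one, Real.norm_eq_abs]
    _ ≤ 1 * (‖p - q‖ + ‖p - q‖) := by
        gcongr
        · exact inv_le_one_of_one_le₀ hp
        · rw [abs_sub_comm]; exact abs_norm_sub_norm_le p q
    _ = 2 * ‖p - q‖ := by ring

noncomputable def cubeFace {n : ℕ} (i : Fin (n + 1)) (c : ℝ) (v : Fin n → ℝ) :
    EuclideanSpace ℝ (Fin (n + 1)) :=
  WithLp.toLp 2 (i.insertNth (α := fun _ => ℝ) c v)

theorem lipschitzWith_cubeFace {n : ℕ} (i : Fin (n + 1)) (c : ℝ) :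
    LipschitzWith ((n + 1 : ℝ≥0) ^ (2⁻¹ : ℝ)) (cubeFace (n := n) i c) := by
  have h := (PiLp.lipschitzWith_toLp 2 fun _ : Fin (n + 1) => ℝ).comp
    (Fin.isometry_insertNth i c).lipschitz
  simp only [Fintype.card_fin, Nat.cast_add, Nat.cast_one, one_div, ENNReal.toReal_inv,
    ENNReal.toReal_ofNat, mul_one, Function.comp_def] at h
  exact h

theorem one_le_norm_cubeFace {n : ℕ} (i : Fin (n + 1)) {c : ℝ} (hc : c ∈ ({-1, 1} : Finset ℝ))
    (v : Fin n → ℝ) : 1 ≤ ‖cubeFace i c v‖ := by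
  have hc1 : |c| = 1 := by
    rcases Finset.mem_insert.1 hc with rfl | hc <;> simp_all
  calc (1 : ℝ) = ‖(cubeFace i c v).ofLp i‖ := by simp [cubeFace, hc1]
    _ ≤ ‖cubeFace i c v‖ := PiLp.norm_apply_le _ i

theorem exists_mem_cubeFace_inv_norm_smul_eq {n : ℕ} {u : EuclideanSpace ℝ (Fin (n + 1))}
    (hu : ‖u‖ = 1) : ∃ i, ∃ c ∈ ({-1, 1} : Finset ℝ), ∃ v ∈ closedBall (0 : Fin n → ℝ) 1,
      ‖cubeFace i c v‖⁻¹ • cubeFace i c v = u := by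
  obtain ⟨i, hi⟩ := Finite.exists_max fun j => |u j|
  have hm : 0 < |u i| := by
    by_contra! h
    have : u = 0 := by
      ext j
      exact abs_nonpos_iff.1 ((hi j).trans h)
    simp [this] at hu
  set w := |u i|⁻¹ • u with hw
  have hwj : ∀ j, |w j| = |u j| / |u i| := fun j => by
    simp [hw, abs_mul, div_eq_inv_mul]
  have hwi : |w i| = 1 := by rw [hwj, div_self hm.ne']
  refine ⟨i, w i, ?_, i.removeNth w.ofLp, ?_, ?_⟩
  · rcases (abs_eq zero_le_one).1 hwi with h | h <;> simp [h]
  · rw [mem_closedBall_zero_iff, pi_norm_le_iff_of_nonneg zero_le_one]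
    intro k
    rw [Real.norm_eq_abs, Fin.removeNth, hwj, div_le_one hm]
    exact hi _
  · rw [cubeFace, show w i = w.ofLp i from rfl, Fin.insertNth_self_removeNth, WithLp.toLp_ofLp,
      hw, norm_smul, hu, mul_one, norm_inv, Real.norm_eq_abs, abs_abs, inv_inv,
      smul_inv_smul₀ hm.ne']

theorem hausdorffMeasure_unitSphere_ne_top (n : ℕ) :
    μH[(n : ℝ)] (sphere (0 : EuclideanSpace ℝ (Fin (n + 1))) 1) ≠ ⊤ := by
  have hcover : sphere (0 : EuclideanSpace ℝ (Fin (n + 1))) 1 ⊆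
      ⋃ i, ⋃ c ∈ ({-1, 1} : Finset ℝ), (fun x => ‖x‖⁻¹ • x) '' (cubeFace i c '' closedBall 0 1) :=
    fun u hu => by
    obtain ⟨i, c, hc, v, hv, rfl⟩ :=
      exists_mem_cubeFace_inv_norm_smul_eq (mem_sphere_zero_iff_norm.1 hu)
    simp only [mem_iUnion]
    exact ⟨i, c, hc, mem_image_of_mem _ (mem_image_of_mem _ hv)⟩
  have hball : μH[(n : ℝ)] (closedBall (0 : Fin n → ℝ) 1) ≠ ⊤ := by
    have hvol := hausdorffMeasure_pi_real (ι := Fin n)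
    rw [Fintype.card_fin] at hvol
    rw [hvol]
    exact measure_closedBall_lt_top.ne
  refine ne_top_of_le_ne_top ?_ ((measure_mono hcover).trans
    ((measure_iUnion_fintype_le _ _).trans
      (Finset.sum_le_sum fun i _ => measure_biUnion_finset_le _ _)))
  refine ENNReal.sum_ne_top.2 fun i _ => ENNReal.sum_ne_top.2 fun c hc => ?_
  have hN := (lipschitzOnWith_inv_norm_smul.mono (image_subset_iff.2
    fun v (_ : v ∈ closedBall 0 1) => one_le_norm_cubeFace i hc v)).hausdorffMeasure_image_le
      n.cast_nonneg
  have hF :=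
    (lipschitzWith_cubeFace i c).hausdorffMeasure_image_le n.cast_nonneg (closedBall 0 1)
  refine ne_top_of_le_ne_top ?_ (hN.trans (mul_le_mul_right hF _))
  exact ENNReal.mul_ne_top (by simp) (ENNReal.mul_ne_top (by simp) hball)

namespace FisherBingham

noncomputable def exponent {n : ℕ} (x y : Fin n → ℝ) (t : EuclideanSpace ℝ (Fin n)) : ℝ :=
  ∑ i, (x i * t i ^ 2 + y i * t i)

variable {n : ℕ} (x y : Fin n → ℝ)

theorem exponent_update (i : Fin n) (s : ℝ) (t : EuclideanSpace ℝ (Fin n)) :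
    exponent x (update y i s) t = exponent x y t + (s - y i) * t i := by
  have h : ∀ j, x j * t j ^ 2 + update y i s j * t j =
      x j * t j ^ 2 + y j * t j + if j = i then (s - y i) * t i else 0 := fun j => by
    rcases eq_or_ne j i with rfl | hj
    · simp only [update_self, if_true]
      ring
    · simp [hj]
  simp only [exponent, h, Finset.sum_add_distrib, Finset.sum_ite_eq', Finset.mem_univ,
    if_true]

@[fun_prop]
theorem contDiff_exponent {k : WithTop ℕ∞} : ContDiff ℝ k (exponent x y) := by
  unfold exponent
  fun_prop

theorem fderiv_exponent_apply_self (t : EuclideanSpace ℝ (Fin n)) :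
    fderiv ℝ (exponent x y) t t = 2 * ∑ i, x i * t i ^ 2 + ∑ i, y i * t i := by
  have hray := hasDerivAt_comp_smul_const
    ((contDiff_exponent x y (k := 1)).differentiable one_ne_zero ((1 : ℝ) • t))
  have hquad : (fun ρ : ℝ => exponent x y (ρ • t)) =
      fun ρ => ρ ^ 2 * ∑ i, x i * t i ^ 2 + ρ * ∑ i, y i * t i := by
    ext ρ
    simp only [exponent, PiLp.smul_apply, smul_eq_mul, Finset.mul_sum,
      ← Finset.sum_add_distrib]
    exact Finset.sum_congr rfl fun j _ => by ring
  rw [hquad, one_smul] at hray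
  refine hray.unique ?_
  simpa using
    ((hasDerivAt_pow 2 (1 : ℝ)).mul_const _).fun_add ((hasDerivAt_id' (1 : ℝ)).mul_const _)

variable {μ : Measure (EuclideanSpace ℝ (Fin n))} {K : Set (EuclideanSpace ℝ (Fin n))}

theorem pd_setIntegral_pow_mul_exp (hK : IsCompact K) (hμK : μ K ≠ ⊤) (i : Fin n) (k : ℕ) :
    pd i (fun y => ∫ t in K, t i ^ k * Real.exp (exponent x y t) ∂μ) =
      fun y => ∫ t in K, t i ^ (k + 1) * Real.exp (exponent x y t) ∂μ := by
  ext y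
  have hderiv : ∀ s t,
      HasDerivAt (fun s => t i ^ k * Real.exp (exponent x y t + (s - y i) * t i))
        (t i ^ (k + 1) * Real.exp (exponent x y t + (s - y i) * t i)) s := fun s t => by
    refine ((((hasDerivAt_id' s).sub_const (y i)).mul_const (t i)).const_add
      (exponent x y t) |>.exp |>.const_mul (t i ^ k)).congr_deriv ?_
    ring
  have h := hasDerivAt_setIntegral_of_continuous hK hμK (by fun_prop) (by fun_prop) hderiv (y i)
  simp only [pd, exponent_update]
  simpa using h.deriv

theorem setIntegral_fderiv_exp_apply_self (hK : IsCompact K) (hμK : μ K ≠ ⊤) :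
    ∫ t in K, fderiv ℝ (fun t => Real.exp (exponent x y t)) t t ∂μ =
      2 * ∑ i, x i * ∫ t in K, t i ^ 2 * Real.exp (exponent x y t) ∂μ +
        ∑ i, y i * ∫ t in K, t i * Real.exp (exponent x y t) ∂μ := by
  have hintegrable :
      ∀ g : EuclideanSpace ℝ (Fin n) → ℝ, Continuous g → Integrable g (μ.restrict K) :=
    fun g hg => hg.continuousOn.integrableOn_of_subset_isCompact hK hK.measurableSet subset_rfl hμK
  have hEuler : ∀ t, fderiv ℝ (fun t => Real.exp (exponent x y t)) t t =
      ∑ i, (2 * x i * (t i ^ 2 * Real.exp (exponent x y t)) +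
        y i * (t i * Real.exp (exponent x y t))) := fun t => by
    rw [fderiv_exp ((contDiff_exponent x y (k := 1)).differentiable one_ne_zero t),
      FunLike.coe_smul, Pi.smul_apply, fderiv_exponent_apply_self, smul_eq_mul, Finset.mul_sum,
      ← Finset.sum_add_distrib, Finset.mul_sum]
    exact Finset.sum_congr rfl fun i _ => by ring
  simp_rw [hEuler]
  rw [integral_finsetSum _ fun i _ => hintegrable _ (by fun_prop), Finset.mul_sum,
    ← Finset.sum_add_distrib]
  refine Finset.sum_congr rfl fun i _ => ?_
  rw [integral_add ((hintegrable _ (by fun_prop)).const_mul _)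
      ((hintegrable _ (by fun_prop)).const_mul _),
    integral_const_mul, integral_const_mul]
  ring

end FisherBingham

open FisherBingham

theorem Ztilde_euler_radial_general (d : ℕ) (x y : Fin (d + 1) → ℝ)
    (r : ℝ) (hr : 0 < r) :
    r * deriv (fun s => Ztilde d x y s) r =
      2 * ∑ i, x i * pd i (pd i (fun y' => Ztilde d x y' r)) y +
        ∑ i, y i * pd i (fun y' => Ztilde d x y' r) y +
        d * Ztilde d x y r := by
  have h1 := hausdorffMeasure_unitSphere_ne_top d
  have hS := isCompact_sphere (0 : EuclideanSpace ℝ (Fin (d + 1))) r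
  have hSfin := hausdorffMeasure_sphere_ne_top d.cast_nonneg h1 hr
  have hZ : ∀ y' s, Ztilde d x y' s =
      ∫ t in sphere 0 s, Real.exp (exponent x y' t) ∂μH[(d : ℝ)] := fun _ _ => rfl
  have hpd : ∀ i, pd i (fun y' => ∫ t in sphere 0 r, Real.exp (exponent x y' t) ∂μH[(d : ℝ)]) =
      fun y' => ∫ t in sphere 0 r, t i * Real.exp (exponent x y' t) ∂μH[(d : ℝ)] := fun i => by
    simpa using pd_setIntegral_pow_mul_exp x hS hSfin i 0
  have hpd2 : ∀ i,
      pd i (fun y' => ∫ t in sphere 0 r, t i * Real.exp (exponent x y' t) ∂μH[(d : ℝ)]) =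
        fun y' => ∫ t in sphere 0 r, t i ^ 2 * Real.exp (exponent x y' t) ∂μH[(d : ℝ)] :=
    fun i => by simpa using pd_setIntegral_pow_mul_exp x hS hSfin i 1
  have hrad := hasDerivAt_setIntegral_sphere d.cast_nonneg h1
    (f := fun t => Real.exp (exponent x y t)) (by fun_prop) hr
  simp only [hZ, hpd, hpd2]
  rw [hrad.deriv, setIntegral_fderiv_exp_apply_self x y hS hSfin]
  field_simp
  ring

theorem Ztilde_euler_radial (d : ℕ) (hd : 1 ≤ d) (x y : Fin (d + 1) → ℝ)
    (r : ℝ) (hr : 0 < r) :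
    r * deriv (fun s => Ztilde d x y s) r =
      2 * ∑ i, x i * pd i (pd i (fun y' => Ztilde d x y' r)) y +
        ∑ i, y i * pd i (fun y' => Ztilde d x y' r) y +
        d * Ztilde d x y r :=
  Ztilde_euler_radial_general d x y r hr
end
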